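/- arXiv:2603.05306 — 2 statements merged into one kernel-verified Lean document; each statement's English description precedes it below -/
import Mathlib

section
/- Let p ≥ 4 and b ∈ [0, 1/2). Let A be the symmetric matrix indexed by I = {(i,j) : 1 ≤ i < j ≤ p} with entries A_{e,f} = 1 if e = f, A_{e,f} = b if the pairs e and f share exactly one element, and A_{e,f} = 0 if they are disjoint. Then the smallest eigenvalue of A equals 1 − 2b. -/
/-!
Let `N` be the incidence matrix between pairs and points, `N e i = 1` iff `i ∈ e`. Then
`(N Nᵀ) e f = #(e ∩ f)`, which is `2`, `1` or `0`, so `A = (1 - 2b) • 1 + b • N Nᵀ`. Since `N Nᵀ`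
is positive semidefinite and `b ≥ 0`, every eigenvalue of `A` is at least `1 - 2b`. Since
`N Nᵀ` has rank at most `p < p(p-1)/2` for `p ≥ 4`, it is singular, so `1 - 2b` is attained.
-/

open Finset

/-- The matrix on unordered pairs from `{1,…,p}`: diagonal `1`, entries `b` for pairs
sharing exactly one element, `0` for disjoint pairs. -/
noncomputable def pairMatrix (p : ℕ) (b : ℝ) :
    Matrix {e : Finset (Fin p) // e.card = 2} {e : Finset (Fin p) // e.card = 2} ℝ :=
  fun e f => if e = f then 1 else if (e.1 ∩ f.1).card = 1 then b else 0

open Matrix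

theorem Finset.card_inter_lt_of_ne {α : Type*} [DecidableEq α] {s t : Finset α} (hst : s ≠ t)
    (hcard : #s = #t) : #(s ∩ t) < #s := by
  refine (card_le_card inter_subset_left).lt_of_ne fun h => hst ?_
  have hsub : s ⊆ t := inter_eq_left.mp (eq_of_subset_of_card_le inter_subset_left h.ge)
  exact eq_of_subset_of_card_le hsub hcard.ge

theorem Nat.lt_choose_two {p : ℕ} (hp : 4 ≤ p) : p < p.choose 2 := by
  rw [Nat.choose_two_right, Nat.lt_div_iff_mul_lt' (Nat.even_mul_pred_self _).two_dvd]
  nlinarith [Nat.mul_le_mul_left p (show 3 ≤ p - 1 by omega)]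

theorem Matrix.isLeast_spectrum_smul_one_add_smul_mul_transpose {m n : Type*} [Fintype m]
    [Fintype n] [DecidableEq m] (N : Matrix m n ℝ) (hcard : Fintype.card n < Fintype.card m)
    (c : ℝ) {b : ℝ} (hb : 0 ≤ b) :
    IsLeast (spectrum ℝ (c • 1 + b • (N * Nᵀ))) c := by
  have hpsd : (b • (N * Nᵀ)).PosSemidef := by
    simpa using (posSemidef_self_mul_conjTranspose N).smul hb
  have hsingular : ¬IsUnit (b • (N * Nᵀ)) := fun hunit => by
    rw [← Matrix.mul_smul] at hunit
    have := (rank_of_isUnit _ hunit).symm.trans_le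
      ((rank_mul_le_left N (b • Nᵀ)).trans N.rank_le_card_width)
    omega
  rw [← Algebra.algebraMap_eq_smul_one, ← spectrum.singleton_add_eq]
  refine ⟨⟨c, rfl, 0, (spectrum.zero_mem_iff ℝ).mpr hsingular, add_zero c⟩, ?_⟩
  rintro _ ⟨_, rfl, μ, hμ, rfl⟩
  simpa using (posSemidef_iff_isHermitian_and_spectrum_nonneg.mp hpsd).2 hμ

noncomputable def pairIncidence (p : ℕ) : Matrix {e : Finset (Fin p) // e.card = 2} (Fin p) ℝ :=
  fun e i => if i ∈ e.1 then 1 else 0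

theorem pairIncidence_mul_transpose_apply {p : ℕ} (e f : {e : Finset (Fin p) // e.card = 2}) :
    (pairIncidence p * (pairIncidence p)ᵀ) e f = #(e.1 ∩ f.1) := by
  simp [pairIncidence, mul_apply, ← ite_and, ← mem_inter, inter_comm]

theorem pairMatrix_eq_smul_one_add (p : ℕ) (b : ℝ) :
    pairMatrix p b = (1 - 2 * b) • 1 + b • (pairIncidence p * (pairIncidence p)ᵀ) := by
  ext e f
  rw [Matrix.add_apply, Matrix.smul_apply, Matrix.smul_apply, one_apply,
    pairIncidence_mul_transpose_apply, pairMatrix]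
  by_cases hef : e = f
  · subst hef
    simp only [if_true, inter_self, e.2]
    push_cast
    ring
  · have hlt : #(e.1 ∩ f.1) < 2 :=
      (card_inter_lt_of_ne (Subtype.coe_ne_coe.mpr hef) (e.2.trans f.2.symm)).trans_eq e.2
    interval_cases #(e.1 ∩ f.1) <;> simp [hef]

theorem stmt2_general (p : ℕ) (hp : 4 ≤ p) (b : ℝ) (hb0 : 0 ≤ b) :
    IsLeast (spectrum ℝ (pairMatrix p b)) (1 - 2 * b) := by
  rw [pairMatrix_eq_smul_one_add]
  refine isLeast_spectrum_smul_one_add_smul_mul_transpose _ ?_ _ hb0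
  rw [Fintype.card_finset_len, Fintype.card_fin]
  exact Nat.lt_choose_two hp

theorem stmt2 (p : ℕ) (hp : 4 ≤ p) (b : ℝ) (hb0 : 0 ≤ b) (hb : b < 1 / 2) :
    IsLeast (spectrum ℝ (pairMatrix p b)) (1 - 2 * b) :=
  stmt2_general p hp b hb0
end

section
/- Let ζ₁, ζ₂, … be i.i.d. Exp(1) random variables, η_i := −log(ζ₁+⋯+ζ_i), and let (Z_{ij})_{i<j} be i.i.d. standard normals independent of (ζ_i). For c ≥ 0 define Y_c := sup_{i<j} ((η_i + η_j)/√2 + c Z_{ij}). Then Y_c < ∞ almost surely. -/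
/-
A Chernoff bound with `E e^{-ζ} = 1/2` and Borel–Cantelli show that `ζ₁ + ⋯ + ζₙ > n / 2` for all
large `n`, so `ηᵢ ≤ C - log (i + 1)`. A standard Gaussian exceeds `2 √(log ((i + 1) (j + 1)))` with
probability at most `(i + 1)⁻² (j + 1)⁻²`, which is summable over pairs, so again by Borel–Cantelli
`Z_{ij} ≤ D + 2 √L` with `L = log (i + 1) + log (j + 1)`. The `(i, j)` term is then at most
`√2 C + c D + 2 c √L - L / √2`, and `2 c √L - L / √2 ≤ √2 c²` by completing the square.
-/

open MeasureTheory ProbabilityTheory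
open Real Set Filter

lemma bddAbove_range_of_finite_lt {ι : Type*} {f : ι → ℝ} {C : ℝ} (h : {i | C < f i}.Finite) :
    BddAbove (range f) :=
  (isBoundedUnder_of_eventually_le (a := C) (h.eventually_cofinite_notMem.mono fun _ hi =>
    not_lt.1 hi)).bddAbove_range_of_cofinite

lemma exp_half_div_two_lt_one : exp (1 / 2) / 2 < 1 := by
  rw [div_lt_one two_pos]
  exact (exp_lt_exp.2 (by linarith [log_two_gt_d9])).trans_eq (exp_log two_pos)

namespace ProbabilityTheory

lemma exponentialPDF_mul_exp {r t : ℝ} (hr : 0 ≤ r) (ht : t < r) (x : ℝ) :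
    exponentialPDF r x * ENNReal.ofReal (exp (t * x)) =
      ENNReal.ofReal (r / (r - t)) * exponentialPDF (r - t) x := by
  have hrt : 0 < r - t := sub_pos.2 ht
  rw [exponentialPDF_eq, exponentialPDF_eq]
  split_ifs
  · rw [← ENNReal.ofReal_mul (by positivity), ← ENNReal.ofReal_mul (by positivity), mul_assoc,
      ← exp_add]
    congr 1
    field_simp
    ring_nf
  · simp

lemma mgf_id_expMeasure {r t : ℝ} (hr : 0 ≤ r) (ht : t < r) :
    mgf id (expMeasure r) t = r / (r - t) := by
  have hpdf (s : ℝ) : Measurable (exponentialPDF s) :=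
    (measurable_exponentialPDFReal s).ennreal_ofReal
  rw [mgf, integral_eq_lintegral_of_nonneg_ae (ae_of_all _ fun x => (exp_pos _).le) (by fun_prop),
    show expMeasure r = volume.withDensity (exponentialPDF r) from rfl,
    lintegral_withDensity_eq_lintegral_mul _ (hpdf r) (by fun_prop)]
  simp only [Pi.mul_apply, id, exponentialPDF_mul_exp hr ht]
  rw [lintegral_const_mul _ (hpdf _), lintegral_exponentialPDF_eq_one (sub_pos.2 ht), mul_one,
    ENNReal.toReal_ofReal (div_nonneg hr (sub_pos.2 ht).le)]

variable {Ω : Type*} [MeasurableSpace Ω] {P : Measure Ω}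

lemma mgf_of_map_eq_expMeasure {X : Ω → ℝ} (hX : AEMeasurable X P) {r t : ℝ}
    (hmap : P.map X = expMeasure r) (hr : 0 ≤ r) (ht : t < r) : mgf X P t = r / (r - t) := by
  rw [← mgf_id_map hX, hmap, mgf_id_expMeasure hr ht]

lemma measureReal_sum_le_le_of_map_eq_expMeasure [IsProbabilityMeasure P] {X : ℕ → Ω → ℝ}
    (hindep : iIndepFun X P) (hmeas : ∀ k, Measurable (X k))
    (hmap : ∀ k, P.map (X k) = expMeasure 1) (n : ℕ) (a : ℝ) :
    P.real {ω | ∑ k ∈ Finset.range n, X k ω ≤ a} ≤ exp a / 2 ^ n := by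
  have hmgf (k : ℕ) : mgf (X k) P (-1) = 2⁻¹ := by
    rw [mgf_of_map_eq_expMeasure (hmeas k).aemeasurable (hmap k) zero_le_one (by norm_num)]
    norm_num
  have hint (k : ℕ) : Integrable (fun ω => exp (-1 * X k ω)) P :=
    mgf_pos_iff.1 (by rw [hmgf k]; norm_num)
  have chernoff := measure_le_le_exp_mul_mgf (X := ∑ k ∈ Finset.range n, X k) a (t := -1)
    (by norm_num) (hindep.integrable_exp_mul_sum hmeas fun k _ => hint k)
  rw [hindep.mgf_sum hmeas, Finset.prod_congr rfl fun k _ => hmgf k] at chernoff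
  simpa [Finset.sum_apply, div_eq_mul_inv] using chernoff

lemma hasSubgaussianMGF_of_map_eq_gaussianReal [IsProbabilityMeasure P] {X : Ω → ℝ}
    {v : NNReal} (hmap : P.map X = gaussianReal 0 v) : HasSubgaussianMGF X v P where
  integrable_exp_mul t := mgf_pos_iff.1 (by rw [mgf_gaussianReal hmap]; positivity)
  mgf_le t := by rw [mgf_gaussianReal hmap, zero_mul, zero_add]

lemma ae_finite_setOf_mem_of_measureReal_le [IsFiniteMeasure P] {ι : Type*} [Countable ι]
    {s : ι → Set Ω} {b : ι → ℝ} (hs : ∀ i, P.real (s i) ≤ b i) (hb : Summable b) :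
    ∀ᵐ ω ∂P, {i | ω ∈ s i}.Finite :=
  ae_finite_setOfPred_mem <| ne_top_of_le_ne_top hb.tsum_ofReal_ne_top <|
    ENNReal.tsum_le_tsum fun i => by
      rw [← ofReal_measureReal]
      exact ENNReal.ofReal_le_ofReal (hs i)

lemma ae_bddAbove_neg_log_sum_add_log [IsProbabilityMeasure P] {X : ℕ → Ω → ℝ}
    (hindep : iIndepFun X P) (hmeas : ∀ k, Measurable (X k))
    (hmap : ∀ k, P.map (X k) = expMeasure 1) :
    ∀ᵐ ω ∂P, BddAbove (range fun n : ℕ =>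
      -log (∑ k ∈ Finset.range (n + 1), X k ω) + log (n + 1)) := by
  have hbound (n : ℕ) : P.real {ω | ∑ k ∈ Finset.range (n + 1), X k ω ≤ (n + 1) / 2}
      ≤ (exp (1 / 2) / 2) ^ (n + 1) := by
    refine (measureReal_sum_le_le_of_map_eq_expMeasure hindep hmeas hmap _ _).trans_eq ?_
    rw [div_pow, ← exp_nat_mul]
    push_cast
    ring_nf
  have hsum : Summable fun n : ℕ => (exp (1 / 2) / 2) ^ (n + 1) :=
    (summable_nat_add_iff 1).2 <| summable_geometric_of_lt_one (by positivity)
      exp_half_div_two_lt_one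
  filter_upwards [ae_finite_setOf_mem_of_measureReal_le hbound hsum] with ω hω
  refine bddAbove_range_of_finite_lt (C := log 2) (hω.subset fun n hn => ?_)
  simp only [mem_ofPred_eq] at hn ⊢
  by_contra! hlarge
  have hlog := log_lt_log (by positivity) hlarge
  rw [log_div (by positivity) two_ne_zero] at hlog
  linarith

lemma ae_bddAbove_sub_two_sqrt_log [IsProbabilityMeasure P] {Z : ℕ × ℕ → Ω → ℝ}
    (hmap : ∀ p, P.map (Z p) = gaussianReal 0 1) :
    ∀ᵐ ω ∂P, BddAbove (range fun p : ℕ × ℕ =>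
      Z p ω - 2 * √(log (p.1 + 1) + log (p.2 + 1))) := by
  have hexp (x : ℝ) (hx : 0 < x) : exp (-(2 * log x)) = (x ^ 2)⁻¹ := by
    rw [exp_neg, two_mul, exp_add, exp_log hx, sq]
  have hbound (p : ℕ × ℕ) : P.real {ω | 2 * √(log (p.1 + 1) + log (p.2 + 1)) ≤ Z p ω}
      ≤ ((p.1 + 1 : ℝ) ^ 2)⁻¹ * ((p.2 + 1 : ℝ) ^ 2)⁻¹ := by
    have hL : 0 ≤ log (p.1 + 1) + log (p.2 + 1) :=
      add_nonneg (log_nonneg (by simp)) (log_nonneg (by simp))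
    refine ((hasSubgaussianMGF_of_map_eq_gaussianReal (hmap p)).measure_ge_le
      (by positivity)).trans_eq ?_
    rw [mul_pow, sq_sqrt hL, NNReal.coe_one,
      show -(2 ^ 2 * (log (p.1 + 1) + log (p.2 + 1))) / (2 * 1)
        = -(2 * log (p.1 + 1)) + -(2 * log (p.2 + 1)) by ring,
      exp_add, hexp _ (by positivity), hexp _ (by positivity)]
  have hinv : Summable fun n : ℕ => ((n + 1 : ℝ) ^ 2)⁻¹ := by
    simpa using (summable_nat_add_iff 1).2 (summable_nat_pow_inv.2 one_lt_two)
  filter_upwards [ae_finite_setOf_mem_of_measureReal_le hbound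
    (hinv.mul_of_nonneg hinv (fun _ => by positivity) fun _ => by positivity)] with ω hω
  refine bddAbove_range_of_finite_lt (C := 0) (hω.subset fun p hp => ?_)
  simp only [mem_ofPred_eq] at hp ⊢
  linarith

end ProbabilityTheory

lemma bddAbove_range_add_mul_of_log_bounds {η : ℕ → ℝ} {Z : ℕ × ℕ → ℝ} {c : ℝ} (hc : 0 ≤ c)
    (hη : BddAbove (range fun n : ℕ => η n + log (n + 1)))
    (hZ : BddAbove (range fun p : ℕ × ℕ => Z p - 2 * √(log (p.1 + 1) + log (p.2 + 1)))) :
    BddAbove (range fun p : ℕ × ℕ => (η p.1 + η p.2) / √2 + c * Z p) := by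
  obtain ⟨C, hC⟩ := hη
  obtain ⟨D, hD⟩ := hZ
  rw [mem_upperBounds, forall_mem_range] at hC hD
  refine ⟨2 * C / √2 + c * D + √2 * c ^ 2, forall_mem_range.2 fun ⟨i, j⟩ => ?_⟩
  set L := log (i + 1) + log (j + 1)
  have hL : 0 ≤ L := add_nonneg (log_nonneg (by simp)) (log_nonneg (by simp))
  have hηij : η i + η j ≤ 2 * C - L := by linarith [hC i, hC j]
  have hZij : Z (i, j) ≤ D + 2 * √L := by linarith [hD (i, j)]
  have hsqrt2 : 0 < √2 := by positivity
  have hsquare : 2 * c * √L - L / √2 ≤ √2 * c ^ 2 := by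
    rw [div_eq_mul_inv]
    nlinarith [sq_nonneg (√L - √2 * c), sq_sqrt hL, sq_sqrt zero_le_two,
      mul_inv_cancel₀ hsqrt2.ne']
  calc (η i + η j) / √2 + c * Z (i, j) ≤ (2 * C - L) / √2 + c * (D + 2 * √L) := by gcongr
    _ ≤ 2 * C / √2 + c * D + √2 * c ^ 2 := by rw [sub_div]; linarith

theorem stmt19 {Ω : Type*} [MeasurableSpace Ω] (P : Measure Ω) [IsProbabilityMeasure P]
    (c : ℝ) (hc : 0 ≤ c)
    (F : (ℕ ⊕ ℕ × ℕ) → Ω → ℝ)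
    (hindep : iIndepFun F P)
    (hmeas : ∀ a, Measurable (F a))
    (hexp : ∀ i : ℕ, Measure.map (F (Sum.inl i)) P = expMeasure 1)
    (hgauss : ∀ p : ℕ × ℕ, Measure.map (F (Sum.inr p)) P = gaussianReal 0 1)
    (η : ℕ → Ω → ℝ)
    (hη : ∀ i ω, η i ω = - Real.log (∑ k ∈ Finset.range (i + 1), F (Sum.inl k) ω)) :
    ∀ᵐ ω ∂P, BddAbove (Set.range fun q : {q : ℕ × ℕ // q.1 < q.2} =>
      (η q.1.1 ω + η q.1.2 ω) / Real.sqrt 2 + c * F (Sum.inr q.1) ω) := by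
  filter_upwards [ae_bddAbove_neg_log_sum_add_log (hindep.precomp Sum.inl_injective)
      (fun k => hmeas _) hexp, ae_bddAbove_sub_two_sqrt_log hgauss] with ω hζ hZ
  simp only [← hη] at hζ
  refine (bddAbove_range_add_mul_of_log_bounds hc hζ hZ).mono ?_
  rintro _ ⟨q, rfl⟩
  exact ⟨q.1, rfl⟩
end
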